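/- arXiv:quant-ph/0703231 — 3 statements merged into one kernel-verified Lean document; each statement's English description precedes it below -/
import Mathlib

section
/- Let a₁, …, aₙ be a probability vector, let 1 ≤ k < n, let 0 < p < 1, and set q = Σ_{j=1}^{k} aⱼ. Assume 0 < q < 1. Let N⁻¹ = p·q + (1−p)·(1−q) and M⁻¹ = p·(1−q) + (1−p)·q, and let b⁰ and b¹ be the Bayes updates of a at k with parameter p. Then N⁻¹·H(b⁰) + M⁻¹·H(b¹) = H(a) + H₂(p) − H₂(p·q + (1−p)·(1−q)); that is, the expected entropy decrease N⁻¹·(H(a) − H(b⁰)) + M⁻¹·(H(a) − H(b¹)) equals H₂(p·q + (1−p)·(1−q)) − H₂(p). -/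
/-!
Read `a` as the law of a hidden index `X` and `b⁰, b¹` as its posteriors after a noisy answer `Y`
to "is `X < k`?" that is correct with probability `p`. Then `P(Y = 0) = N⁻¹`, and the left-hand
side is `H(X | Y) = H(X) + H(Y | X) − H(Y)` with `H(Y | X) = H₂(p)` and `H(Y) = H₂(N⁻¹)`.
This chain rule comes from summing `−xy·log(xy) = −y·x·log x − x·y·log y` over the indices, so it
holds for an arbitrary likelihood of the answer, not only for one taking the values `p`, `1 − p`.
-/

/-- Shannon entropy (base 2) of a vector `a` indexed by `0, …, n-1`:
`H(a) = −Σᵢ aᵢ·log₂(aᵢ)`, with the convention `0·log₂(0) = 0`. -/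
noncomputable def shannonEntropy (n : ℕ) (a : ℕ → ℝ) : ℝ :=
  ∑ i ∈ Finset.range n, -(a i * Real.logb 2 (a i))

/-- Binary entropy `H₂(x) = −x·log₂(x) − (1−x)·log₂(1−x)`,
with the convention `0·log₂(0) = 0`. -/
noncomputable def binEntropy (x : ℝ) : ℝ :=
  -x * Real.logb 2 x - (1 - x) * Real.logb 2 (1 - x)

open Finset
open Real (logb)

lemma neg_mul_logb_mul (b x y : ℝ) :
    -(x * y * logb b (x * y)) = y * -(x * logb b x) + x * -(y * logb b y) := by
  rcases eq_or_ne x 0 with rfl | hx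
  · simp
  rcases eq_or_ne y 0 with rfl | hy
  · simp
  rw [Real.logb_mul hx hy]
  ring

lemma mul_neg_mul_logb_div (b x z : ℝ) (hz : z ≠ 0) :
    z * -(x / z * logb b (x / z)) = -(x * logb b x) + x * logb b z := by
  rw [div_eq_mul_inv, neg_mul_logb_mul, Real.logb_inv]
  field_simp

lemma binEntropy_one_sub (x : ℝ) : binEntropy (1 - x) = binEntropy x := by
  rw [binEntropy, binEntropy, sub_sub_cancel]
  ring

lemma sum_range_ite_lt_mul {n k : ℕ} (hkn : k ≤ n) (u v : ℝ) (a : ℕ → ℝ) :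
    ∑ i ∈ range n, (if i < k then u else v) * a i
      = u * ∑ i ∈ range k, a i + v * (∑ i ∈ range n, a i - ∑ i ∈ range k, a i) := by
  rw [← sum_range_add_sum_Ico _ hkn, ← sum_range_add_sum_Ico a hkn, add_sub_cancel_left,
    mul_sum, mul_sum]
  congr 1
  · exact sum_congr rfl fun i hi => by rw [if_pos (mem_range.mp hi)]
  · exact sum_congr rfl fun i hi => by rw [if_neg (mem_Ico.mp hi).1.not_gt]

lemma mul_shannonEntropy_posterior (n : ℕ) (l a : ℕ → ℝ)
    (hZ : ∑ i ∈ range n, l i * a i ≠ 0) :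
    (∑ i ∈ range n, l i * a i)
        * shannonEntropy n (fun i => l i * a i / ∑ j ∈ range n, l j * a j)
      = ∑ i ∈ range n, l i * -(a i * logb 2 (a i))
        + ∑ i ∈ range n, a i * -(l i * logb 2 (l i))
        + (∑ i ∈ range n, l i * a i) * logb 2 (∑ i ∈ range n, l i * a i) := by
  set Z := ∑ i ∈ range n, l i * a i
  simp only [shannonEntropy, mul_sum, mul_neg_mul_logb_div 2 _ _ hZ, neg_mul_logb_mul,
    sum_add_distrib]
  rw [← sum_mul]
  ring

theorem expected_posterior_shannonEntropy (n : ℕ) (l a : ℕ → ℝ)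
    (ha : ∑ i ∈ range n, a i = 1)
    (hZ₀ : ∑ i ∈ range n, l i * a i ≠ 0) (hZ₁ : 1 - ∑ i ∈ range n, l i * a i ≠ 0) :
    (∑ i ∈ range n, l i * a i)
        * shannonEntropy n (fun i => l i * a i / ∑ j ∈ range n, l j * a j)
      + (1 - ∑ i ∈ range n, l i * a i)
        * shannonEntropy n (fun i => (1 - l i) * a i / (1 - ∑ j ∈ range n, l j * a j))
      = shannonEntropy n a + ∑ i ∈ range n, a i * binEntropy (l i)
        - binEntropy (∑ i ∈ range n, l i * a i) := by
  have hcompl : ∑ i ∈ range n, (1 - l i) * a i = 1 - ∑ i ∈ range n, l i * a i := by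
    simp only [sub_mul, one_mul, sum_sub_distrib, ha]
  have hpost₀ := mul_shannonEntropy_posterior n l a hZ₀
  have hpost₁ := mul_shannonEntropy_posterior n (fun i => 1 - l i) a (hcompl ▸ hZ₁)
  rw [hcompl] at hpost₁
  rw [hpost₀, hpost₁]
  have hself : ∑ i ∈ range n, l i * -(a i * logb 2 (a i))
      + ∑ i ∈ range n, (1 - l i) * -(a i * logb 2 (a i)) = shannonEntropy n a := by
    rw [shannonEntropy, ← sum_add_distrib]
    exact sum_congr rfl fun i _ => by ring
  have hcond : ∑ i ∈ range n, a i * -(l i * logb 2 (l i))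
      + ∑ i ∈ range n, a i * -((1 - l i) * logb 2 (1 - l i))
      = ∑ i ∈ range n, a i * binEntropy (l i) := by
    rw [← sum_add_distrib]
    exact sum_congr rfl fun i _ => by rw [binEntropy]; ring
  rw [binEntropy]
  linarith

theorem bayes_update_expected_entropy_general (n k : ℕ) (a : ℕ → ℝ) (p : ℝ)
    (hkn : k < n)
    (ha1 : ∑ i ∈ Finset.range n, a i = 1)
    (hp0 : 0 < p) (hp1 : p < 1)
    (q : ℝ) (hq : q = ∑ j ∈ Finset.range k, a j)
    (hq0 : 0 < q) (hq1 : q < 1)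
    (Ninv Minv : ℝ)
    (hN : Ninv = p * q + (1 - p) * (1 - q))
    (hM : Minv = p * (1 - q) + (1 - p) * q)
    (b0 b1 : ℕ → ℝ)
    (hb0 : ∀ j, b0 j = if j < k then p * a j / Ninv else (1 - p) * a j / Ninv)
    (hb1 : ∀ j, b1 j = if j < k then (1 - p) * a j / Minv else p * a j / Minv) :
    Ninv * shannonEntropy n b0 + Minv * shannonEntropy n b1
      = shannonEntropy n a + binEntropy p - binEntropy (p * q + (1 - p) * (1 - q)) ∧
    Ninv * (shannonEntropy n a - shannonEntropy n b0)
      + Minv * (shannonEntropy n a - shannonEntropy n b1)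
      = binEntropy (p * q + (1 - p) * (1 - q)) - binEntropy p := by
  set l : ℕ → ℝ := fun j => if j < k then p else 1 - p
  have hZ : ∑ i ∈ range n, l i * a i = Ninv := by
    rw [sum_range_ite_lt_mul hkn.le, ha1, ← hq, hN]
  have hMN : Minv = 1 - Ninv := by rw [hM, hN]; ring
  have hNpos : 0 < Ninv := by rw [hN]; nlinarith
  have hMpos : 0 < Minv := by rw [hM]; nlinarith
  have hb0' : b0 = fun j => l j * a j / ∑ i ∈ range n, l i * a i := by
    funext j; rw [hb0, hZ]; split_ifs with h <;> simp [l, h]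
  have hb1' : b1 = fun j => (1 - l j) * a j / (1 - ∑ i ∈ range n, l i * a i) := by
    funext j; rw [hb1, hZ, ← hMN]; split_ifs with h <;> simp [l, h]
  have hcond : ∑ i ∈ range n, a i * binEntropy (l i) = binEntropy p := by
    simp only [l, apply_ite binEntropy, binEntropy_one_sub, ite_self, ← sum_mul, ha1, one_mul]
  have hmain := expected_posterior_shannonEntropy n l a ha1
    (hZ ▸ hNpos.ne') (hZ ▸ hMN ▸ hMpos.ne')
  rw [← hb0', ← hb1', hcond, hZ, ← hMN] at hmain
  rw [← hN]
  refine ⟨hmain, ?_⟩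
  linear_combination -hmain + shannonEntropy n a * hMN

/-- Let `a` be a probability vector on `{1,…,n}` (indexed here by
`0, …, n-1`), `1 ≤ k < n`, `0 < p < 1`, `q = Σ_{j=1}^{k} aⱼ` with `0 < q < 1`.
Let `N⁻¹ = p·q + (1−p)·(1−q)` and `M⁻¹ = p·(1−q) + (1−p)·q`, and let `b⁰, b¹` be the
Bayes updates of `a` at `k` with parameter `p`. Then
`N⁻¹·H(b⁰) + M⁻¹·H(b¹) = H(a) + H₂(p) − H₂(N⁻¹)`; equivalently the expected entropy
decrease `N⁻¹·(H(a) − H(b⁰)) + M⁻¹·(H(a) − H(b¹))` equals `H₂(N⁻¹) − H₂(p)`. -/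
theorem bayes_update_expected_entropy (n k : ℕ) (a : ℕ → ℝ) (p : ℝ)
    (hk1 : 1 ≤ k) (hkn : k < n)
    (ha0 : ∀ i ∈ Finset.range n, 0 ≤ a i)
    (ha1 : ∑ i ∈ Finset.range n, a i = 1)
    (hp0 : 0 < p) (hp1 : p < 1)
    (q : ℝ) (hq : q = ∑ j ∈ Finset.range k, a j)
    (hq0 : 0 < q) (hq1 : q < 1)
    (Ninv Minv : ℝ)
    (hN : Ninv = p * q + (1 - p) * (1 - q))
    (hM : Minv = p * (1 - q) + (1 - p) * q)
    (b0 b1 : ℕ → ℝ)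
    (hb0 : ∀ j, b0 j = if j < k then p * a j / Ninv else (1 - p) * a j / Ninv)
    (hb1 : ∀ j, b1 j = if j < k then (1 - p) * a j / Minv else p * a j / Minv) :
    Ninv * shannonEntropy n b0 + Minv * shannonEntropy n b1
      = shannonEntropy n a + binEntropy p - binEntropy (p * q + (1 - p) * (1 - q)) ∧
    Ninv * (shannonEntropy n a - shannonEntropy n b0)
      + Minv * (shannonEntropy n a - shannonEntropy n b1)
      = binEntropy (p * q + (1 - p) * (1 - q)) - binEntropy p :=
  bayes_update_expected_entropy_general n k a p hkn ha1 hp0 hp1 q hq hq0 hq1 Ninv Minv hN hM b0 b1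
    hb0 hb1
end

section
/- Let a₁, …, aₙ be a probability vector, let 1 ≤ k < n, let 1/2 < p < 1, and set q = Σ_{j=1}^{k} aⱼ. Let ε be a real with 0 ≤ ε ≤ 1/2 and |q − 1/2| ≤ ε. Let N⁻¹ = p·q + (1−p)·(1−q) and M⁻¹ = p·(1−q) + (1−p)·q, and let b⁰ and b¹ be the Bayes updates of a at k with parameter p. Then the expected information increase satisfies N⁻¹·(H(a) − H(b⁰)) + M⁻¹·(H(a) − H(b¹)) ≥ I(p) − 4ε²·(1−2p)², where I(p) = 1 − H₂(p). -/
open Finset Filter Topology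

private lemma psi_hasSum {t : ℝ} (ht : |t| < 1) :
    HasSum (fun k : ℕ => 2 * t ^ (2 * k + 2) / ((2 * (k:ℝ) + 1) * (2 * (k:ℝ) + 2)))
      ((1 + t) * Real.log (1 + t) + (1 - t) * Real.log (1 - t)) := by
  obtain ⟨hl, hr⟩ := abs_lt.1 ht
  have h1t : (0:ℝ) < 1 + t := by linarith
  have h1t' : (0:ℝ) < 1 - t := by linarith
  have h2 : |t ^ 2| < 1 := by
    rw [abs_pow]
    exact pow_lt_one₀ (abs_nonneg t) ht (by norm_num)
  have h1 := Real.hasSum_log_sub_log_of_abs_lt_one ht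
  have hA := Real.hasSum_pow_div_log_of_abs_lt_one h2
  have combo := (h1.mul_left t).sub hA
  have hval : t * (Real.log (1 + t) - Real.log (1 - t)) - -Real.log (1 - t ^ 2)
      = (1 + t) * Real.log (1 + t) + (1 - t) * Real.log (1 - t) := by
    have h : (1:ℝ) - t ^ 2 = (1 + t) * (1 - t) := by ring
    rw [h, Real.log_mul h1t.ne' h1t'.ne']
    ring
  rw [hval] at combo
  refine combo.congr_fun fun k => ?_
  have hk1 : (2 * (k:ℝ) + 1) ≠ 0 := by positivity
  have hk2 : ((k:ℝ) + 1) ≠ 0 := by positivity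
  have hp1 : (t ^ 2) ^ (k + 1) = t ^ (2 * k + 2) := by
    rw [← pow_mul]; ring_nf
  have hp2 : t * t ^ (2 * k + 1) = t ^ (2 * k + 2) := by
    rw [← pow_succ']
  rw [hp1] at *
  field_simp
  ring

private lemma psi_le_two_log_two {t : ℝ} (hl : -1 < t) (hr : t < 1) :
    (1 + t) * Real.log (1 + t) + (1 - t) * Real.log (1 - t) ≤ 2 * Real.log 2 := by
  have h1t : (0:ℝ) < 1 + t := by linarith
  have h1t' : (0:ℝ) < 1 - t := by linarith
  have e1 : Real.log (1 + t) = Real.log 2 + Real.log ((1 + t) / 2) := by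
    rw [← Real.log_mul two_ne_zero (by positivity)]
    congr 1; ring
  have e2 : Real.log (1 - t) = Real.log 2 + Real.log ((1 - t) / 2) := by
    rw [← Real.log_mul two_ne_zero (by positivity)]
    congr 1; ring
  have a1 : (1 + t) * Real.log ((1 + t) / 2) ≤ 0 :=
    mul_nonpos_of_nonneg_of_nonpos h1t.le (Real.log_nonpos (by positivity) (by linarith))
  have a2 : (1 - t) * Real.log ((1 - t) / 2) ≤ 0 :=
    mul_nonpos_of_nonneg_of_nonpos h1t'.le (Real.log_nonpos (by positivity) (by linarith))
  calc (1 + t) * Real.log (1 + t) + (1 - t) * Real.log (1 - t)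
      = 2 * Real.log 2 + ((1 + t) * Real.log ((1 + t) / 2) + (1 - t) * Real.log ((1 - t) / 2)) := by
        rw [e1, e2]; ring
    _ ≤ 2 * Real.log 2 := by linarith

private lemma partial_sum_le (K : ℕ) :
    ∑ k ∈ Finset.range K, 2 / ((2 * (k:ℝ) + 1) * (2 * (k:ℝ) + 2)) ≤ 2 * Real.log 2 := by
  set F : ℝ → ℝ := fun t => ∑ k ∈ Finset.range K, 2 * t ^ (2 * k + 2) / ((2 * (k:ℝ) + 1) * (2 * (k:ℝ) + 2)) with hF
  have hcont : Continuous F := by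
    apply continuous_finset_sum
    intro i _
    fun_prop
  have htends : Tendsto F (𝓝[<] (1:ℝ)) (𝓝 (F 1)) :=
    (hcont.tendsto 1).mono_left nhdsWithin_le_nhds
  have hev : ∀ᶠ t in 𝓝[<] (1:ℝ), F t ≤ 2 * Real.log 2 := by
    filter_upwards [self_mem_nhdsWithin,
      (eventually_gt_nhds (show (0:ℝ) < 1 by norm_num)).filter_mono nhdsWithin_le_nhds]
      with t ht1 ht0
    have habs : |t| < 1 := abs_lt.2 ⟨by linarith, ht1⟩
    have hsum := psi_hasSum habs
    have hle : F t ≤ (1 + t) * Real.log (1 + t) + (1 - t) * Real.log (1 - t) :=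
      sum_le_hasSum _ (fun i _ => by positivity) hsum
    exact hle.trans (psi_le_two_log_two (by linarith) ht1)
  have := le_of_tendsto htends hev
  simpa [hF] using this

private lemma psi_le_sq {t : ℝ} (ht : |t| < 1) :
    (1 + t) * Real.log (1 + t) + (1 - t) * Real.log (1 - t) ≤ 2 * t ^ 2 * Real.log 2 := by
  set f : ℕ → ℝ := fun k => 2 / ((2 * (k:ℝ) + 1) * (2 * (k:ℝ) + 2)) with hf
  have hf0 : ∀ k, 0 ≤ f k := fun k => by positivity
  have hsummable : Summable f := summable_of_sum_range_le hf0 partial_sum_le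
  have htsum : ∑' k, f k ≤ 2 * Real.log 2 := Real.tsum_le_of_sum_range_le hf0 partial_sum_le
  have hg := psi_hasSum ht
  have hle : (1 + t) * Real.log (1 + t) + (1 - t) * Real.log (1 - t) ≤ ∑' k, t ^ 2 * f k := by
    rw [← hg.tsum_eq]
    refine Summable.tsum_le_tsum (fun k => ?_) hg.summable (hsummable.mul_left _)
    have hpow : t ^ (2 * k + 2) ≤ t ^ 2 := by
      have h1 : |t| ^ (2 * k + 2) ≤ |t| ^ 2 :=
        pow_le_pow_of_le_one (abs_nonneg t) ht.le (by omega)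
      have e1 : |t| ^ (2 * k + 2) = t ^ (2 * k + 2) := Even.pow_abs ⟨k + 1, by ring⟩ t
      have e2 : |t| ^ 2 = t ^ 2 := sq_abs t
      rw [e1, e2] at h1
      exact h1
    have hD : (0:ℝ) < (2 * (k:ℝ) + 1) * (2 * (k:ℝ) + 2) := by positivity
    rw [hf]
    rw [show t ^ 2 * (2 / ((2 * (k:ℝ) + 1) * (2 * (k:ℝ) + 2)))
        = 2 * t ^ 2 / ((2 * (k:ℝ) + 1) * (2 * (k:ℝ) + 2)) by ring]
    gcongr
  have hmul : ∑' k, t ^ 2 * f k = t ^ 2 * ∑' k, f k := tsum_mul_left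
  have : t ^ 2 * ∑' k, f k ≤ t ^ 2 * (2 * Real.log 2) :=
    mul_le_mul_of_nonneg_left htsum (sq_nonneg t)
  calc (1 + t) * Real.log (1 + t) + (1 - t) * Real.log (1 - t)
      ≤ ∑' k, t ^ 2 * f k := hle
    _ = t ^ 2 * ∑' k, f k := hmul
    _ ≤ t ^ 2 * (2 * Real.log 2) := this
    _ = 2 * t ^ 2 * Real.log 2 := by ring

private lemma mullog_ge {x : ℝ} (h0 : 0 < x) (h1 : x < 1) :
    4 * (x * (1 - x)) * Real.log 2 ≤ -(x * Real.log x) - (1 - x) * Real.log (1 - x) := by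
  have ht : |2 * x - 1| < 1 := abs_lt.2 ⟨by linarith, by linarith⟩
  have h := psi_le_sq ht
  have e1 : (1:ℝ) + (2 * x - 1) = 2 * x := by ring
  have e2 : (1:ℝ) - (2 * x - 1) = 2 * (1 - x) := by ring
  rw [e1, e2, Real.log_mul two_ne_zero h0.ne',
    Real.log_mul two_ne_zero (by linarith : (1:ℝ) - x ≠ 0)] at h
  nlinarith [h]

private lemma term_eq (c d y : ℝ) (hc : 0 < c) (hd : 0 < d) (hy : 0 ≤ y) :
    d * -(c * y / d * Real.logb 2 (c * y / d))
      = c * -(y * Real.logb 2 y) + ((Real.logb 2 d - Real.logb 2 c) * c) * y := by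
  rcases hy.eq_or_lt with h | h
  · simp [← h]
  · have hlog : Real.logb 2 (c * y / d) = Real.logb 2 c + Real.logb 2 y - Real.logb 2 d := by
      rw [Real.logb_div (by positivity) hd.ne', Real.logb_mul hc.ne' h.ne']
    rw [hlog]
    field_simp
    ring

/-- Let `a` be a probability vector on `{1,…,n}` (indexed here by
`0, …, n-1`), `1 ≤ k < n`, `1/2 < p < 1`, `q = Σ_{j=1}^{k} aⱼ`, and let `ε` satisfy
`0 ≤ ε ≤ 1/2` and `|q − 1/2| ≤ ε`. Let `N⁻¹ = p·q + (1−p)·(1−q)`,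
`M⁻¹ = p·(1−q) + (1−p)·q`, and let `b⁰, b¹` be the Bayes updates of `a` at `k` with
parameter `p`. Then the expected information increase satisfies
`N⁻¹·(H(a) − H(b⁰)) + M⁻¹·(H(a) − H(b¹)) ≥ I(p) − 4ε²·(1−2p)²` where `I(p) = 1 − H₂(p)`. -/
theorem bayes_update_expected_information_gain (n k : ℕ) (a : ℕ → ℝ) (p : ℝ)
    (hk1 : 1 ≤ k) (hkn : k < n)
    (ha0 : ∀ i ∈ Finset.range n, 0 ≤ a i)
    (ha1 : ∑ i ∈ Finset.range n, a i = 1)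
    (hp0 : 1/2 < p) (hp1 : p < 1)
    (q : ℝ) (hq : q = ∑ j ∈ Finset.range k, a j)
    (ε : ℝ) (hε0 : 0 ≤ ε) (hε1 : ε ≤ 1/2) (hqε : |q - 1/2| ≤ ε)
    (Ninv Minv : ℝ)
    (hN : Ninv = p * q + (1 - p) * (1 - q))
    (hM : Minv = p * (1 - q) + (1 - p) * q)
    (b0 b1 : ℕ → ℝ)
    (hb0 : ∀ j, b0 j = if j < k then p * a j / Ninv else (1 - p) * a j / Ninv)
    (hb1 : ∀ j, b1 j = if j < k then (1 - p) * a j / Minv else p * a j / Minv) :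
    Ninv * (shannonEntropy n a - shannonEntropy n b0)
      + Minv * (shannonEntropy n a - shannonEntropy n b1)
      ≥ (1 - binEntropy p) - 4 * ε ^ 2 * (1 - 2 * p) ^ 2 := by
  have hpp : 0 < p := by linarith
  have hpp' : 0 < 1 - p := by linarith
  have hsplit : ∀ f : ℕ → ℝ, ∑ j ∈ Finset.range n, f j
      = ∑ j ∈ Finset.range k, f j + ∑ j ∈ Finset.Ico k n, f j := by
    intro f
    rw [Finset.range_eq_Ico, ← Finset.sum_Ico_consecutive f (Nat.zero_le k) hkn.le,
      ← Finset.range_eq_Ico]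
  have ha0k : ∀ j ∈ Finset.range k, 0 ≤ a j := fun j hj =>
    ha0 j (Finset.mem_range.2 ((Finset.mem_range.1 hj).trans hkn))
  have ha0I : ∀ j ∈ Finset.Ico k n, 0 ≤ a j := fun j hj =>
    ha0 j (Finset.mem_range.2 (Finset.mem_Ico.1 hj).2)
  have hq' : ∑ j ∈ Finset.Ico k n, a j = 1 - q := by
    have := hsplit a
    rw [ha1, ← hq] at this
    linarith
  have hq0 : 0 ≤ q := hq ▸ Finset.sum_nonneg ha0k
  have hq1 : q ≤ 1 := by
    have := Finset.sum_nonneg ha0I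
    rw [hq'] at this
    linarith
  have hNpos : 0 < Ninv := by
    rw [hN]; nlinarith [mul_nonneg hq0 (by linarith : (0:ℝ) ≤ 2 * p - 1)]
  have hMpos : 0 < Minv := by
    rw [hM]; nlinarith [mul_nonneg (by linarith : (0:ℝ) ≤ 2 * p - 1) (by linarith : (0:ℝ) ≤ 1 - q)]
  have hN1 : Ninv < 1 := by
    rw [hN]; nlinarith [mul_nonneg (by linarith : (0:ℝ) ≤ 2 * p - 1) (by linarith : (0:ℝ) ≤ 1 - q)]
  have hNM : Minv = 1 - Ninv := by rw [hN, hM]; ring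
  set L := Real.logb 2 with hL
  set A1 := ∑ j ∈ Finset.range k, -(a j * L (a j)) with hA1
  set A2 := ∑ j ∈ Finset.Ico k n, -(a j * L (a j)) with hA2
  -- entropy of a
  have EH : shannonEntropy n a = A1 + A2 := hsplit _
  -- E0
  have E0 : Ninv * shannonEntropy n b0
      = p * A1 + ((L Ninv - L p) * p) * q
        + ((1 - p) * A2 + ((L Ninv - L (1 - p)) * (1 - p)) * (1 - q)) := by
    rw [shannonEntropy, Finset.mul_sum, hsplit]
    congr 1
    · have : ∀ j ∈ Finset.range k, Ninv * -(b0 j * L (b0 j))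
          = p * -(a j * L (a j)) + ((L Ninv - L p) * p) * a j := by
        intro j hj
        rw [hb0 j, if_pos (Finset.mem_range.1 hj)]
        exact term_eq p Ninv (a j) hpp hNpos (ha0k j hj)
      rw [Finset.sum_congr rfl this, Finset.sum_add_distrib, ← Finset.mul_sum,
        ← Finset.mul_sum, ← hq, ← hA1]
    · have : ∀ j ∈ Finset.Ico k n, Ninv * -(b0 j * L (b0 j))
          = (1 - p) * -(a j * L (a j)) + ((L Ninv - L (1 - p)) * (1 - p)) * a j := by
        intro j hj
        rw [hb0 j, if_neg (by simpa using (Finset.mem_Ico.1 hj).1)]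
        exact term_eq (1 - p) Ninv (a j) hpp' hNpos (ha0I j hj)
      rw [Finset.sum_congr rfl this, Finset.sum_add_distrib, ← Finset.mul_sum,
        ← Finset.mul_sum, hq', ← hA2]
  -- E1
  have E1 : Minv * shannonEntropy n b1
      = (1 - p) * A1 + ((L Minv - L (1 - p)) * (1 - p)) * q
        + (p * A2 + ((L Minv - L p) * p) * (1 - q)) := by
    rw [shannonEntropy, Finset.mul_sum, hsplit]
    congr 1
    · have : ∀ j ∈ Finset.range k, Minv * -(b1 j * L (b1 j))
          = (1 - p) * -(a j * L (a j)) + ((L Minv - L (1 - p)) * (1 - p)) * a j := by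
        intro j hj
        rw [hb1 j, if_pos (Finset.mem_range.1 hj)]
        exact term_eq (1 - p) Minv (a j) hpp' hMpos (ha0k j hj)
      rw [Finset.sum_congr rfl this, Finset.sum_add_distrib, ← Finset.mul_sum,
        ← Finset.mul_sum, ← hq, ← hA1]
    · have : ∀ j ∈ Finset.Ico k n, Minv * -(b1 j * L (b1 j))
          = p * -(a j * L (a j)) + ((L Minv - L p) * p) * a j := by
        intro j hj
        rw [hb1 j, if_neg (by simpa using (Finset.mem_Ico.1 hj).1)]
        exact term_eq p Minv (a j) hpp hMpos (ha0I j hj)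
      rw [Finset.sum_congr rfl this, Finset.sum_add_distrib, ← Finset.mul_sum,
        ← Finset.mul_sum, hq', ← hA2]
  -- identity
  have identity : Ninv * (shannonEntropy n a - shannonEntropy n b0)
      + Minv * (shannonEntropy n a - shannonEntropy n b1)
      = binEntropy Ninv - binEntropy p := by
    have hbN : binEntropy Ninv = -Ninv * L Ninv - Minv * L Minv := by
      rw [binEntropy, ← hNM, hL]
    have hbp : binEntropy p = -p * L p - (1 - p) * L (1 - p) := by rw [binEntropy, hL]
    rw [mul_sub, mul_sub, E0, E1, EH, hbN, hbp, hNM, hN]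
    ring
  rw [ge_iff_le, identity]
  -- final inequality
  have hlog2 : (0:ℝ) < Real.log 2 := Real.log_pos one_lt_two
  have hbe : binEntropy Ninv = (-(Ninv * Real.log Ninv) - (1 - Ninv) * Real.log (1 - Ninv))
      / Real.log 2 := by
    rw [binEntropy, Real.logb, Real.logb]
    ring
  have h4 := mullog_ge hNpos hN1
  have hbin : 4 * (Ninv * (1 - Ninv)) ≤ binEntropy Ninv := by
    rw [hbe, le_div_iff₀ hlog2]
    linarith
  have h5 : (q - 1/2) ^ 2 ≤ ε ^ 2 := by
    obtain ⟨h5a, h5b⟩ := abs_le.1 hqε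
    nlinarith
  have h6 : (2 * p - 1) ^ 2 * (q - 1/2) ^ 2 ≤ (2 * p - 1) ^ 2 * ε ^ 2 :=
    mul_le_mul_of_nonneg_left h5 (sq_nonneg _)
  have e : 4 * (Ninv * (1 - Ninv)) = 1 - (2 * p - 1) ^ 2 * (2 * q - 1) ^ 2 := by
    rw [hN]; ring
  have hfin : 1 - 4 * ε ^ 2 * (1 - 2 * p) ^ 2 ≤ 4 * (Ninv * (1 - Ninv)) := by
    have h7 : (2 * p - 1) ^ 2 * (2 * q - 1) ^ 2 = 4 * ((2 * p - 1) ^ 2 * (q - 1/2) ^ 2) := by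
      ring
    have h8 : 4 * ε ^ 2 * (1 - 2 * p) ^ 2 = 4 * ((2 * p - 1) ^ 2 * ε ^ 2) := by ring
    rw [e]
    linarith [h6]
  linarith
end

section
/- For every real p with 1/2 < p < 1 and every real a > 0, one has (p/(1−p))^{a·p·(1−p)/(2p−1)} ≤ e^{a/2}. Equivalently, p·(1−p)·ln(p/(1−p)) ≤ (2p−1)/2 for all 1/2 < p < 1. -/
/-! With `x = p / (1 - p) ≥ 1` one has `p (1 - p) (x - x⁻¹) = p² - (1 - p)² = 2p - 1`, so the
logarithmic bound is `log x ≤ (x - x⁻¹) / 2 = sinh (log x)`, i.e. `t ≤ sinh t` for `t ≥ 0`.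
The power bound is its exponential form. -/

open Real

lemma Real.log_le_half_sub_inv {x : ℝ} (hx : 1 ≤ x) : log x ≤ (x - x⁻¹) / 2 := by
  rw [← sinh_log (by linarith)]
  exact self_le_sinh_iff.mpr (log_nonneg hx)

lemma Real.mul_one_sub_mul_log_div_one_sub_le {p : ℝ} (hp0 : 1 / 2 < p) (hp1 : p < 1) :
    p * (1 - p) * log (p / (1 - p)) ≤ (2 * p - 1) / 2 := by
  have hq : 0 < 1 - p := by linarith
  have hx : 1 ≤ p / (1 - p) := (le_div_iff₀ hq).mpr (by linarith)
  calc p * (1 - p) * log (p / (1 - p))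
      ≤ p * (1 - p) * ((p / (1 - p) - (p / (1 - p))⁻¹) / 2) := by
        gcongr
        exact log_le_half_sub_inv hx
    _ = (2 * p - 1) / 2 := by
        field_simp
        ring

/-- For every real `p` with `1/2 < p < 1` and every real `a > 0`,
`(p/(1−p))^(a·p·(1−p)/(2p−1)) ≤ e^(a/2)` (real exponentiation); equivalently,
`p·(1−p)·ln(p/(1−p)) ≤ (2p−1)/2`. -/
theorem odds_ratio_power_bound (p : ℝ) (hp0 : 1/2 < p) (hp1 : p < 1) :
    (∀ a : ℝ, 0 < a →
      (p / (1 - p)) ^ (a * p * (1 - p) / (2 * p - 1)) ≤ Real.exp (a / 2)) ∧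
    p * (1 - p) * Real.log (p / (1 - p)) ≤ (2 * p - 1) / 2 := by
  have hlog := mul_one_sub_mul_log_div_one_sub_le hp0 hp1
  refine ⟨fun a ha => ?_, hlog⟩
  have hx : 0 < p / (1 - p) := div_pos (by linarith) (by linarith)
  have hc : 0 < 2 * p - 1 := by linarith
  rw [rpow_def_of_pos hx, exp_le_exp]
  calc log (p / (1 - p)) * (a * p * (1 - p) / (2 * p - 1))
      = a * (p * (1 - p) * log (p / (1 - p))) / (2 * p - 1) := by ring
    _ ≤ a * ((2 * p - 1) / 2) / (2 * p - 1) := by gcongr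
    _ = a / 2 := by field_simp
end
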